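/- arXiv:2109.04445 — 4 statements merged into one kernel-verified Lean document; each statement's English description precedes it below -/
import Mathlib

section
/- Let G be a finite abelian group and let L ∈ ℤ^{1×d} be a matrix all of whose coefficients are coprime to |G|. If d is even and L admits a canceling partition in G, then L is fully Sidorenko in G; that is, for every function f : G → [0,1] one has t_L(f) ≥ (E(f))^d. -/
open Finset

variable {G : Type*} [AddCommGroup G] [Fintype G] [DecidableEq G]

/-- The configuration `C(L)` given by a matrix `L ∈ ℤ^{1×d}`: the kernel in `G^d` of the
induced map `v ↦ ∑ i, L 0 i • v i`. -/
def config {d : ℕ} (L : Matrix (Fin 1) (Fin d) ℤ) : Finset (Fin d → G) :=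
  Finset.univ.filter fun v => ∑ i, L 0 i • v i = 0

/-- The arithmetic multiplicity `t_L(f)`. -/
noncomputable def tL {d : ℕ} (L : Matrix (Fin 1) (Fin d) ℤ) (f : G → ℝ) : ℝ :=
  (∑ v ∈ config L, ∏ i, f (v i)) / ((config (G := G) L).card : ℝ)

/-- The average `E(f)` of `f` over `G`. -/
noncomputable def avg (f : G → ℝ) : ℝ := (∑ x, f x) / (Fintype.card G : ℝ)

/-- `L` admits a canceling partition in `G`: a partition of the index set into (distinct) pairs,
encoded by a fixed-point-free involution `σ`, such that for each pair `{i, σ i}` the pair of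
coefficients `(L 0 i, L 0 (σ i))` is canceling in `G`, i.e. their sum acts trivially on `G`. -/
def HasCancelingPartition (G : Type*) [AddCommGroup G] {d : ℕ}
    (L : Matrix (Fin 1) (Fin d) ℤ) : Prop :=
  ∃ σ : Equiv.Perm (Fin d), (∀ i, σ i ≠ i) ∧ (∀ i, σ (σ i) = i) ∧
    ∀ i, ∀ x : G, (L 0 i + L 0 (σ i)) • x = 0

/-! Pair each index `i` with its partner `σ i` and keep one index `s` of every pair. Since
`L_s + L_{σ s}` annihilates `G`, a vector of `C(L)` is the same as a pair `(w, w')` of vectors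
indexed by the kept indices with `φ w = φ w'`, where `φ w = ∑ L_s w_s`. Hence
`∑_{C(L)} ∏ f(v_i) = ∑_y h(y)²`, where `h(y)` is the sum of `∏ f(w_s)` over the fiber `φ⁻¹(y)`,
and `|C(L)|` is the same expression for `f = 1`. The fibers of the homomorphism `φ` over its
image all have the same size, so Cauchy–Schwarz over the image of `φ` gives `t_L(f) ≥ E(f)^d`. -/

section FiberPairs

variable {α β : Type*} [Fintype α] [DecidableEq β]

def fiberPairSum (φ : α → β) (P : α → ℝ) : ℝ :=
  ∑ a, ∑ b, if φ a = φ b then P a * P b else 0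

theorem fiberPairSum_eq_sum_sq (φ : α → β) (P : α → ℝ) :
    fiberPairSum φ P = ∑ y ∈ univ.image φ, (∑ a with φ a = y, P a) ^ 2 := by
  have hmaps : ∀ a ∈ (univ : Finset α), φ a ∈ univ.image φ :=
    fun a _ => mem_image_of_mem φ (mem_univ a)
  calc fiberPairSum φ P = ∑ a, ∑ b with φ a = φ b, P a * P b := by
        simp only [fiberPairSum, sum_filter]
    _ = ∑ y ∈ univ.image φ, ∑ a with φ a = y, ∑ b with φ b = y, P a * P b := by
        rw [← sum_fiberwise_of_maps_to hmaps]
        refine sum_congr rfl fun y _ => sum_congr rfl fun a ha => ?_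
        simp only [(mem_filter.1 ha).2, eq_comm]
    _ = _ := by simp only [sq, sum_mul_sum]

/-- Cauchy–Schwarz for the fiber sums of `P` over the image of `φ`. -/
theorem sq_sum_div_card_le_fiberPairSum_div [Nonempty α] (φ : α → β)
    (hφ : ∀ a b, #{x | φ x = φ a} = #{x | φ x = φ b}) (P : α → ℝ) :
    ((∑ a, P a) / Fintype.card α) ^ 2 ≤ fiberPairSum φ P / fiberPairSum φ 1 := by
  set I := univ.image φ
  set h : β → ℝ := fun y => ∑ a with φ a = y, P a
  obtain ⟨a₀⟩ := ‹Nonempty α›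
  set m := #{x | φ x = φ a₀}
  have hfiber : ∀ y ∈ I, #{x | φ x = y} = m := by
    intro y hy
    obtain ⟨a, -, rfl⟩ := mem_image.1 hy
    exact hφ a a₀
  have hcard : Fintype.card α = #I * m := by
    rw [← card_univ, card_eq_sum_card_image φ, sum_congr rfl hfiber, sum_const, smul_eq_mul]
  have hone : fiberPairSum φ 1 = #I * (m : ℝ) ^ 2 := by
    rw [fiberPairSum_eq_sum_sq]
    simp only [Pi.one_apply, sum_const, nsmul_eq_mul, mul_one]
    rw [sum_congr rfl fun y hy => by rw [hfiber y hy], sum_const, nsmul_eq_mul]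
  have hsum : ∑ a, P a = ∑ y ∈ I, h y :=
    (sum_fiberwise_of_maps_to (fun a _ => mem_image_of_mem φ (mem_univ a)) P).symm
  have hCS : (∑ y ∈ I, h y) ^ 2 ≤ #I * ∑ y ∈ I, h y ^ 2 := sq_sum_le_card_mul_sum_sq
  have hI : (0 : ℝ) < #I := Nat.cast_pos.2 (card_pos.2 ⟨φ a₀, mem_image_of_mem φ (mem_univ a₀)⟩)
  have hm : (0 : ℝ) < m := Nat.cast_pos.2 (card_pos.2 ⟨a₀, mem_filter.2 ⟨mem_univ _, rfl⟩⟩)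
  rw [hone, fiberPairSum_eq_sum_sq, hsum, hcard, Nat.cast_mul, div_pow,
    div_le_div_iff₀ (by positivity) (by positivity)]
  calc (∑ y ∈ I, h y) ^ 2 * (#I * m ^ 2) ≤ (#I * ∑ y ∈ I, h y ^ 2) * (#I * m ^ 2) := by gcongr
    _ = (∑ y ∈ I, h y ^ 2) * (#I * m) ^ 2 := by ring

end FiberPairs

noncomputable def pairingEquiv {ι : Type*} [LinearOrder ι] (σ : Equiv.Perm ι)
    (hfix : ∀ i, σ i ≠ i) (hinv : ∀ i, σ (σ i) = i) :
    {i // i < σ i} ⊕ {i // i < σ i} ≃ ι :=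
  Equiv.ofBijective (Sum.elim Subtype.val (σ ∘ Subtype.val)) <| by
    constructor
    · rintro (⟨i, hi⟩ | ⟨i, hi⟩) (⟨j, hj⟩ | ⟨j, hj⟩) hij <;>
        simp only [Sum.elim_inl, Sum.elim_inr, Function.comp_apply] at hij
      · subst hij; rfl
      · subst hij; rw [hinv] at hi; exact absurd (hi.trans hj) (lt_irrefl _)
      · subst hij; rw [hinv] at hj; exact absurd (hi.trans hj) (lt_irrefl _)
      · obtain rfl := σ.injective hij; rfl
    · intro i
      rcases (hfix i).lt_or_gt with hi | hi
      · exact ⟨Sum.inr ⟨σ i, by rwa [hinv]⟩, hinv i⟩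
      · exact ⟨Sum.inl ⟨i, hi⟩, rfl⟩

def zsmulSum {S M : Type*} [Fintype S] [AddCommGroup M] (c : S → ℤ) : (S → M) →+ M :=
  AddMonoidHom.mk' (fun w => ∑ s, c s • w s) fun v w => by
    simp only [Pi.add_apply, smul_add, sum_add_distrib]

theorem zsmulSum_apply {S M : Type*} [Fintype S] [AddCommGroup M] (c : S → ℤ) (w : S → M) :
    zsmulSum c w = ∑ s, c s • w s := rfl

theorem sum_config_eq_fiberPairSum {d : ℕ} (L : Matrix (Fin 1) (Fin d) ℤ) {S : Type*}
    [Fintype S] [DecidableEq S] (τ : S ⊕ S ≃ Fin d)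
    (hcancel : ∀ s (x : G), (L 0 (τ (.inl s)) + L 0 (τ (.inr s))) • x = 0) (f : G → ℝ) :
    ∑ v ∈ config L, ∏ i, f (v i) =
      fiberPairSum (zsmulSum (M := G) fun s => L 0 (τ (.inl s))) fun w => ∏ s, f (w s) := by
  set e : (S → G) × (S → G) ≃ (Fin d → G) :=
    (Equiv.sumArrowEquivProdArrow S S G).symm.trans (τ.arrowCongr (Equiv.refl G))
  have he : ∀ w w' j, e (w, w') (τ j) = Sum.elim w w' j := fun w w' j => by simp [e]; rfl
  rw [config, sum_filter, ← e.sum_comp, Fintype.sum_prod_type, fiberPairSum]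
  refine sum_congr rfl fun w _ => sum_congr rfl fun w' _ => ?_
  have hsum : ∑ i, L 0 i • e (w, w') i =
      zsmulSum (fun s => L 0 (τ (.inl s))) w - zsmulSum (fun s => L 0 (τ (.inl s))) w' := by
    rw [← τ.sum_comp, Fintype.sum_sum_type, zsmulSum_apply, zsmulSum_apply, sub_eq_add_neg,
      ← sum_neg_distrib]
    congr 1 <;> refine sum_congr rfl fun s _ => ?_
    · rw [he, Sum.elim_inl]
    · rw [he, Sum.elim_inr, eq_neg_iff_add_eq_zero, ← add_smul, add_comm]
      exact hcancel s (w' s)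
  have hprod : ∏ i, f (e (w, w') i) = (∏ s, f (w s)) * ∏ s, f (w' s) := by
    simp only [← τ.prod_comp, Fintype.prod_sum_type, he, Sum.elim_inl, Sum.elim_inr]
  simp only [hsum, hprod, sub_eq_zero]

theorem sum_prod_div_card_eq_avg_pow {M : Type*} [Fintype M] (S : Type*) [Fintype S]
    [DecidableEq S] (f : M → ℝ) :
    (∑ w : S → M, ∏ s, f (w s)) / Fintype.card (S → M) = avg f ^ Fintype.card S := by
  rw [← Fintype.prod_sum, prod_const, Fintype.card_pi, prod_const, Nat.cast_pow, ← div_pow,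
    card_univ, avg]

theorem single_equation_fully_sidorenko_general {d : ℕ} (L : Matrix (Fin 1) (Fin d) ℤ)
    (hpart : HasCancelingPartition G L)
    (f : G → ℝ) :
    tL L f ≥ (avg f) ^ d := by
  obtain ⟨σ, hfix, hinv, hcancel⟩ := hpart
  set S := {i // i < σ i}
  obtain ⟨τ, hτ⟩ : ∃ τ : S ⊕ S ≃ Fin d,
      ∀ s (x : G), (L 0 (τ (.inl s)) + L 0 (τ (.inr s))) • x = 0 :=
    ⟨pairingEquiv σ hfix hinv, fun s => hcancel s⟩
  set φ : (S → G) →+ G := zsmulSum fun s => L 0 (τ (.inl s))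
  have hpow : avg f ^ d = ((∑ w : S → G, ∏ s, f (w s)) / Fintype.card (S → G)) ^ 2 := by
    rw [sum_prod_div_card_eq_avg_pow, ← pow_mul]
    congr 1
    simpa [mul_two] using (Fintype.card_congr τ).symm
  have hcard : ((config (G := G) L).card : ℝ) = fiberPairSum φ 1 := by
    simpa [Pi.one_def] using sum_config_eq_fiberPairSum L τ hτ fun _ => 1
  rw [ge_iff_le, tL, sum_config_eq_fiberPairSum L τ hτ f, hcard, hpow]
  exact sq_sum_div_card_le_fiberPairSum_div φ
    (fun a b => AddMonoidHom.card_fiber_eq_of_mem_range φ ⟨a, rfl⟩ ⟨b, rfl⟩) _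

/-- If all coefficients of `L ∈ ℤ^{1×d}` are coprime to `|G|`, `d` is even and `L` admits a
canceling partition in `G`, then `L` is fully Sidorenko in `G`. -/
theorem single_equation_fully_sidorenko {d : ℕ} (L : Matrix (Fin 1) (Fin d) ℤ)
    (hcop : ∀ i, IsCoprime (L 0 i) (Fintype.card G : ℤ))
    (hd : Even d) (hpart : HasCancelingPartition G L)
    (f : G → ℝ) (hf : ∀ x, f x ∈ Set.Icc (0 : ℝ) 1) :
    tL L f ≥ (avg f) ^ d :=
  single_equation_fully_sidorenko_general L hpart f
end

section
/- Let G be a finite abelian group and let L ∈ ℤ^{1×d} be a matrix all of whose coefficients are coprime to |G|. If d is odd, then L is fully common in G; that is, for every function f : G → [0,1] one has t_L(f) + t_L(1−f) ≥ (1/2)^{d−1}. -/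
open Finset

variable {G : Type*} [AddCommGroup G] [Fintype G] [DecidableEq G]

/-!
Write `a = E(f)`. Since `d` is odd, `∏ (1 - f(vᵢ)) = -∏ (f(vᵢ) - 1)`, and the telescoping
expansion of `∏ xᵢ - ∏ (xᵢ - 1)` is a sum of `d` products, the `i`-th of which does not involve
`xᵢ`. As the coefficient of `vᵢ` is invertible on `G`, averaging a function not depending on `vᵢ`
over `C(L)` is the same as averaging it over all of `G^d`, where products of functions of distinct
coordinates average to the product of the averages. Hence `t_L(f) + t_L(1 - f) = a^d + (1 - a)^d`,
which is at least `2^{1-d}` by convexity of `x ↦ x^d`.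
-/

lemma zsmul_surjective_of_isCoprime_card {A : Type*} [AddCommGroup A] [Fintype A] {a : ℤ}
    (h : IsCoprime a (Fintype.card A : ℤ)) : Function.Surjective fun x : A => a • x := by
  obtain ⟨u, v, huv⟩ := h
  intro x
  refine ⟨u • x, ?_⟩
  calc a • u • x = (u * a + v * Fintype.card A) • x := by
        rw [add_smul, mul_smul v, natCast_zsmul, card_nsmul_eq_zero, smul_zero, add_zero,
          mul_comm, mul_smul]
    _ = x := by rw [huv, one_smul]

section Average

variable {α : Type*} [Fintype α]

lemma avg_mem_Icc [Nonempty α] {f : α → ℝ} {a b : ℝ} (hf : ∀ x, f x ∈ Set.Icc a b) :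
    avg f ∈ Set.Icc a b := by
  have hcard : (0 : ℝ) < Fintype.card α := by exact_mod_cast Fintype.card_pos
  have hsum (c : ℝ) : ∑ _x : α, c = c * Fintype.card α := by simp [mul_comm]
  refine ⟨(le_div_iff₀ hcard).2 ?_, (div_le_iff₀ hcard).2 ?_⟩
  · exact (hsum a).symm.le.trans (sum_le_sum fun x _ => (hf x).1)
  · exact (sum_le_sum fun x _ => (hf x).2).trans (hsum b).le

lemma sum_prod_div_card_pow {d : ℕ} (h : Fin d → α → ℝ) :
    (∑ v : Fin d → α, ∏ i, h i (v i)) / (Fintype.card α : ℝ) ^ d = ∏ i, avg (h i) := by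
  simp only [avg, ← Fintype.prod_sum, prod_div_distrib, prod_const, card_univ, Fintype.card_fin]

end Average

section Telescoping

variable {ι R : Type*} [LinearOrder ι]

/-- The `j`-th factor of the `i`-th term in the telescoping expansion of `∏ x - ∏ (x - 1)`. -/
def telescopeFactor [Ring R] (i j : ι) (y : R) : R :=
  if j < i then y - 1 else if i < j then y else 1

@[simp]
lemma telescopeFactor_self [Ring R] (i : ι) (y : R) : telescopeFactor i i y = 1 := by
  simp [telescopeFactor]

lemma prod_sub_prod_sub_one [Fintype ι] [CommRing R] (x : ι → R) :
    ∏ i, x i - ∏ i, (x i - 1) = ∑ i, ∏ j, telescopeFactor i j (x j) := by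
  rw [prod_sub_ordered univ x fun _ => 1, sub_sub_cancel]
  refine sum_congr rfl fun i _ => ?_
  rw [one_mul, prod_filter, prod_filter, ← prod_mul_distrib]
  refine prod_congr rfl fun j _ => ?_
  unfold telescopeFactor
  split_ifs with h₁ h₂ h₂ <;> first | exact absurd h₁ (lt_asymm h₂) | simp

lemma avg_telescopeFactor {α : Type*} [Fintype α] [Nonempty α] (i j : ι) (f : α → ℝ) :
    avg (fun x => telescopeFactor i j (f x)) = telescopeFactor i j (avg f) := by
  have hcard : (Fintype.card α : ℝ) ≠ 0 := by positivity
  unfold telescopeFactor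
  split_ifs <;> simp [avg, sum_sub_distrib, sub_div, hcard]

end Telescoping

lemma sum_zsmul_add_single {A : Type*} [AddCommGroup A] {d : ℕ} (c : Fin d → ℤ) (v : Fin d → A)
    (j : Fin d) (y : A) :
    ∑ i, c i • (v + Pi.single j y : Fin d → A) i = ∑ i, c i • v i + c j • y := by
  simp only [Pi.add_apply, smul_add, sum_add_distrib]
  congr 1
  rw [Fintype.sum_eq_single j fun i hi => by simp [Pi.single_eq_of_ne hi]]
  simp

section Configuration

variable {d : ℕ} (L : Matrix (Fin 1) (Fin d) ℤ)

/-- Translating `vⱼ` carries `C(L)` onto each fibre of `v ↦ ∑ i, L 0 i • v i`. -/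
lemma card_mul_sum_config {j : Fin d} (hj : Function.Surjective fun x : G => L 0 j • x)
    (F : (Fin d → G) → ℝ) (hF : ∀ v y, F (v + Pi.single j y) = F v) :
    (Fintype.card G : ℝ) * ∑ v ∈ config L, F v = ∑ v, F v := by
  rw [← sum_fiberwise univ (fun v => ∑ i, L 0 i • v i) F, ← nsmul_eq_mul, ← card_univ,
    ← sum_const]
  refine sum_congr rfl fun c _ => ?_
  obtain ⟨y, rfl⟩ := hj c
  refine sum_nbij' (· + Pi.single j y) (· - Pi.single j y) ?_ ?_ ?_ ?_ ?_
  · intro v hv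
    simp only [config, mem_filter, mem_univ, true_and] at hv ⊢
    rw [sum_zsmul_add_single, hv, zero_add]
  · intro v hv
    simp only [config, mem_filter, mem_univ, true_and] at hv ⊢
    have h := sum_zsmul_add_single (L 0) (v - Pi.single j y) j y
    rw [sub_add_cancel, hv] at h
    exact add_eq_right.mp h.symm
  · intro v _
    exact add_sub_cancel_right v _
  · intro v _
    exact sub_add_cancel v _
  · intro v _
    exact (hF v y).symm

lemma sum_config_div_card {j : Fin d} (hj : Function.Surjective fun x : G => L 0 j • x)
    (F : (Fin d → G) → ℝ) (hF : ∀ v y, F (v + Pi.single j y) = F v) :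
    (∑ v ∈ config L, F v) / (config (G := G) L).card =
      (∑ v, F v) / (Fintype.card G : ℝ) ^ d := by
  have hG : (Fintype.card G : ℝ) ≠ 0 := by positivity
  have hcard := card_mul_sum_config L hj (fun _ => 1) fun _ _ => rfl
  simp only [sum_const, nsmul_eq_mul, mul_one, card_univ, Fintype.card_fun, Fintype.card_fin,
    Nat.cast_pow] at hcard
  rw [← mul_div_mul_left _ _ hG, card_mul_sum_config L hj F hF, hcard]

lemma sum_config_prod_div_card {j : Fin d} (hj : Function.Surjective fun x : G => L 0 j • x)
    (h : Fin d → G → ℝ) (hhj : h j = 1) :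
    (∑ v ∈ config L, ∏ i, h i (v i)) / (config (G := G) L).card = ∏ i, avg (h i) := by
  have hF (v : Fin d → G) (y : G) :
      ∏ i, h i ((v + Pi.single j y : Fin d → G) i) = ∏ i, h i (v i) := by
    refine prod_congr rfl fun i _ => ?_
    rcases eq_or_ne i j with rfl | hij
    · simp [hhj]
    · simp [Pi.single_eq_of_ne hij]
  rw [sum_config_div_card L hj _ hF, sum_prod_div_card_pow]

lemma tL_add_tL_one_sub (hL : ∀ i, Function.Surjective fun x : G => L 0 i • x) (hd : Odd d)
    (f : G → ℝ) : tL L f + tL L (fun x => 1 - f x) = avg f ^ d + (1 - avg f) ^ d := by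
  have hpoint (v : Fin d → G) : ∏ i, f (v i) + ∏ i, (1 - f (v i)) =
      ∑ i, ∏ j, telescopeFactor i j (f (v j)) := by
    have hodd : ∏ i, (1 - f (v i)) = -∏ i, (f (v i) - 1) := by
      simp only [← neg_sub (f _) 1, prod_neg, card_univ, Fintype.card_fin, hd.neg_one_pow,
        neg_one_mul]
    rw [hodd, ← sub_eq_add_neg, prod_sub_prod_sub_one]
  rw [tL, tL, ← add_div, ← sum_add_distrib]
  simp_rw [hpoint]
  rw [sum_comm, sum_div]
  calc ∑ i, (∑ v ∈ config L, ∏ j, telescopeFactor i j (f (v j))) / (config (G := G) L).card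
      = ∑ i, ∏ j, avg fun x => telescopeFactor i j (f x) :=
        sum_congr rfl fun i _ =>
          sum_config_prod_div_card L (hL i) (fun j x => telescopeFactor i j (f x))
            (funext fun _ => telescopeFactor_self _ _)
    _ = ∑ i : Fin d, ∏ j, telescopeFactor i j (avg f) := by simp only [avg_telescopeFactor]
    _ = avg f ^ d - (avg f - 1) ^ d := by simp [← prod_sub_prod_sub_one]
    _ = avg f ^ d + (1 - avg f) ^ d := by rw [← neg_sub 1 (avg f), hd.neg_pow, sub_neg_eq_add]

end Configuration

/-- If all coefficients of `L ∈ ℤ^{1×d}` are coprime to `|G|` and `d` is odd, then `L` is fully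
common in `G`. -/
theorem single_equation_odd_fully_common {d : ℕ} (L : Matrix (Fin 1) (Fin d) ℤ)
    (hcop : ∀ i, IsCoprime (L 0 i) (Fintype.card G : ℤ))
    (hd : Odd d)
    (f : G → ℝ) (hf : ∀ x, f x ∈ Set.Icc (0 : ℝ) 1) :
    tL L f + tL L (fun x => 1 - f x) ≥ (1 / 2 : ℝ) ^ (d - 1) := by
  rw [ge_iff_le, tL_add_tL_one_sub L (fun i => zsmul_surjective_of_isCoprime_card (hcop i)) hd]
  obtain ⟨ha₀, ha₁⟩ := avg_mem_Icc hf
  have hmean := add_pow_le ha₀ (sub_nonneg.2 ha₁) d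
  rw [add_sub_cancel, one_pow] at hmean
  rw [one_div, inv_pow, inv_le_iff_one_le_mul₀ (by positivity)]
  rwa [mul_comm]
end

section
/- For every d ∈ ℕ there exists a constant C such that the following holds: for every finite abelian group G with |G| > C and every matrix L ∈ ℤ^{1×d} all of whose coefficients are coprime to |G|, if d is odd then L is not Sidorenko in G; that is, there exists a subset A ⊆ G with t_L(A) < (|A|/|G|)^d. -/
open Finset

variable {G : Type*} [AddCommGroup G] [Fintype G] [DecidableEq G]

/-!
Take `A = G ∖ {0}`. For `f = 1 - t·𝟙_{0}`, the weighted count `W_d(c)` of solutions of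
`∑ aᵢ vᵢ = c` with weight `∏ f(vᵢ)` satisfies the convolution recursion
`W_{d+1} = f ∗ W_d`, because `f` is invariant under the automorphisms `x ↦ aᵢ • x`. Hence
`|G|·W_d(c) = (|G| - t)^d + (-t)^d (|G|·[c = 0] - 1)`. With `t = 0` this counts the whole
configuration, `|G|^{d-1}` solutions, and with `t = 1` the solutions inside `A`, namely
`((|G| - 1)^d - (|G| - 1)) / |G|` for odd `d`. So `t_L(A) = (1 - 1/|G|)^d - (|G| - 1)/|G|^d`,
strictly below the density `(|A|/|G|)^d` once `|G| > 1`.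
-/

section WeightedCount

variable {H : Type*} [AddCommGroup H] [Fintype H]

theorem zsmul_bijective_of_isCoprime_card {a : ℤ} (ha : IsCoprime a (Fintype.card H : ℤ)) :
    Function.Bijective fun x : H => a • x := by
  obtain ⟨u, v, huv⟩ := ha
  refine Finite.injective_iff_bijective.mp (Function.LeftInverse.injective (g := (u • ·)) ?_)
  intro x
  calc u • a • x = (u * a + v * Fintype.card H) • x := by
        rw [add_smul, mul_smul, mul_smul, natCast_zsmul, card_nsmul_eq_zero, smul_zero, add_zero]
    _ = x := by rw [huv, one_smul]

theorem zsmul_eq_zero_iff_of_isCoprime_card {a : ℤ} (ha : IsCoprime a (Fintype.card H : ℤ))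
    {x : H} : a • x = 0 ↔ x = 0 :=
  (zsmul_bijective_of_isCoprime_card ha).injective.eq_iff' (zsmul_zero a)

variable [DecidableEq H]

def weightedCount {d : ℕ} (f : H → ℝ) (a : Fin d → ℤ) (c : H) : ℝ :=
  ∑ v : Fin d → H with ∑ i, a i • v i = c, ∏ i, f (v i)

theorem weightedCount_zero (f : H → ℝ) (a : Fin 0 → ℤ) (c : H) :
    weightedCount f a c = if c = 0 then 1 else 0 := by
  split_ifs with hc <;> simp [weightedCount, hc, eq_comm]

theorem weightedCount_succ {d : ℕ} (f : H → ℝ) (a : Fin (d + 1) → ℤ) (c : H) :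
    weightedCount f a c = ∑ x, f x * weightedCount f (Fin.tail a) (c - a 0 • x) := by
  simp only [weightedCount, sum_filter, mul_sum]
  rw [← (Fin.consEquiv fun _ => H).sum_comp, Fintype.sum_prod_type]
  refine sum_congr rfl fun x _ => sum_congr rfl fun w _ => ?_
  simp [Fin.sum_univ_succ, Fin.prod_univ_succ, Fin.tail, eq_sub_iff_add_eq', Fin.consEquiv]

theorem tL_eq_weightedCount_div {d : ℕ} (L : Matrix (Fin 1) (Fin d) ℤ) (f : H → ℝ) :
    tL L f = weightedCount f (L 0) 0 / weightedCount (1 : H → ℝ) (L 0) 0 := by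
  simp [tL, weightedCount, config, sum_const]

theorem card_mul_weightedCount_of_eq_one_off_zero {f : H → ℝ} {t : ℝ} (hf0 : f 0 = 1 - t)
    (hf : ∀ x ≠ 0, f x = 1) {d : ℕ} (a : Fin d → ℤ)
    (ha : ∀ i, IsCoprime (a i) (Fintype.card H : ℤ)) (c : H) :
    (Fintype.card H : ℝ) * weightedCount f a c =
      (Fintype.card H - t) ^ d + (-t) ^ d * (if c = 0 then (Fintype.card H : ℝ) - 1 else -1) := by
  set n : ℝ := (Fintype.card H : ℝ)
  induction d generalizing c with
  | zero => rw [weightedCount_zero]; split_ifs <;> ring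
  | succ d ih =>
    have hf_smul : ∀ x, f (a 0 • x) = f x := fun x => by
      rcases eq_or_ne x 0 with rfl | hx
      · rw [zsmul_zero]
      · rw [hf x hx, hf _ ((zsmul_eq_zero_iff_of_isCoprime_card (ha 0)).not.mpr hx)]
    have hsum : ∑ y, f y = n - t := by
      rw [← add_sum_erase _ _ (mem_univ 0), sum_congr rfl fun x hx => hf x (ne_of_mem_erase hx),
        sum_const, card_erase_of_mem (mem_univ 0), card_univ, nsmul_one,
        Nat.cast_pred Fintype.card_pos, hf0]
      ring
    calc n * weightedCount f a c
        = ∑ x, f (a 0 • x) * (n * weightedCount f (Fin.tail a) (c - a 0 • x)) := by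
          simp only [weightedCount_succ, mul_sum, hf_smul, mul_left_comm]
      _ = ∑ y, f y * (n * weightedCount f (Fin.tail a) (c - y)) :=
          (zsmul_bijective_of_isCoprime_card (ha 0)).sum_comp
            fun y => f y * (n * weightedCount f (Fin.tail a) (c - y))
      _ = ∑ y, (((n - t) ^ d - (-t) ^ d) * f y + (-t) ^ d * n * if y = c then f y else 0) := by
          refine sum_congr rfl fun y _ => ?_
          rw [ih (Fin.tail a) (fun i => ha _)]
          rcases eq_or_ne y c with rfl | hy
          · simp only [sub_self, if_true]; ring
          · simp only [sub_eq_zero, if_neg hy.symm, if_neg hy]; ring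
      _ = (n - t) ^ (d + 1) + (-t) ^ (d + 1) * (if c = 0 then n - 1 else -1) := by
          rw [sum_add_distrib, ← mul_sum, ← mul_sum, hsum, Fintype.sum_ite_eq']
          rcases eq_or_ne c 0 with rfl | hc
          · rw [hf0, if_pos rfl]; ring
          · rw [hf c hc, if_neg hc]; ring

end WeightedCount

/-- For every `d` there is a constant `C` such that: for every finite abelian group `G` with
`|G| > C` and every `L ∈ ℤ^{1×d}` all of whose coefficients are coprime to `|G|`, if `d` is odd
then `L` is not Sidorenko in `G`. -/
theorem single_equation_odd_not_sidorenko (d : ℕ) :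
    ∃ C : ℝ, ∀ (H : Type*) [AddCommGroup H] [Fintype H] [DecidableEq H],
      (Fintype.card H : ℝ) > C →
      ∀ L : Matrix (Fin 1) (Fin d) ℤ,
        (∀ i, IsCoprime (L 0 i) (Fintype.card H : ℤ)) → Odd d →
        ∃ A : Finset H,
          tL L (fun x => if x ∈ A then (1 : ℝ) else 0) <
            ((A.card : ℝ) / (Fintype.card H : ℝ)) ^ d := by
  refine ⟨1, fun H _ _ _ hn L hL hd => ⟨univ.erase 0, ?_⟩⟩
  set n : ℝ := (Fintype.card H : ℝ)
  have hcard : ((univ.erase (0 : H)).card : ℝ) = n - 1 := by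
    rw [card_erase_of_mem (mem_univ _), card_univ, Nat.cast_pred Fintype.card_pos]
  have hA := card_mul_weightedCount_of_eq_one_off_zero
    (f := fun x => if x ∈ univ.erase (0 : H) then (1 : ℝ) else 0) (t := 1)
    (by simp) (fun x hx => by simp [hx]) (L 0) hL 0
  have hG := card_mul_weightedCount_of_eq_one_off_zero (f := (1 : H → ℝ)) (t := 0)
    (by simp) (fun _ _ => rfl) (L 0) hL 0
  rw [if_pos rfl, hd.neg_one_pow] at hA
  rw [neg_zero, zero_pow hd.pos.ne', zero_mul, add_zero, sub_zero] at hG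
  rw [tL_eq_weightedCount_div, hcard, ← mul_div_mul_left _ _ (by positivity : n ≠ 0), hA, hG,
    div_pow]
  exact div_lt_div_of_pos_right (by linarith) (by positivity)
end

section
/- Let G be a finite abelian group and let L ∈ ℤ^{1×d} have full rank in G, i.e. the induced map G^d → G, v ↦ Σ_{i=1}^d L_{1i}·v_i, is surjective. Then for every f : G → [0,1], t_L(f) = Σ_{γ∈Ĝ} Π_{i=1}^d f̂(γ^{L_{1i}}). -/
open Finset

variable {G : Type*} [AddCommGroup G] [Fintype G] [DecidableEq G]

/-- The Fourier transform `f̂(γ) = (1/|G|) ∑ x, γ(x) f(x)` of `f : G → ℝ` at a character `γ` of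
`G` (characters of the finite abelian group `G` are represented as `AddChar G ℂ`; they
automatically take values on the unit circle). -/
noncomputable def ft (f : G → ℝ) (γ : AddChar G ℂ) : ℂ :=
  (∑ x, γ x * (f x : ℂ)) / (Fintype.card G : ℂ)

/-!
Expanding each `f̂(γ^{a_i})` and multiplying out, the right-hand side becomes
`|G|^{-d} ∑_{v ∈ G^d} (∑_γ γ(∑ a_i v_i)) ∏ f(v_i)`. By orthogonality of characters the inner sum
is `|G|` on the configuration and `0` off it, so the right-hand side equals
`|G|^{1-d} ∑_{v ∈ C(L)} ∏ f(v_i)`. Surjectivity of `v ↦ ∑ a_i v_i` gives `|C(L)| = |G|^{d-1}`.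
-/

lemma AddChar.map_sum_eq_prod {A M ι : Type*} [AddCommMonoid A] [CommMonoid M]
    (ψ : AddChar A M) (s : Finset ι) (g : ι → A) :
    ψ (∑ i ∈ s, g i) = ∏ i ∈ s, ψ (g i) := by
  induction s using Finset.cons_induction with
  | empty => simp
  | cons i s hi ih => rw [sum_cons, prod_cons, AddChar.map_add_eq_mul, ih]

lemma AddMonoidHom.card_ker_mul_card_of_surjective {A B : Type*} [AddGroup A] [AddGroup B]
    (φ : A →+ B) (hφ : Function.Surjective φ) : Nat.card φ.ker * Nat.card B = Nat.card A := by
  rw [← φ.ker.card_mul_index, AddSubgroup.index_ker, AddMonoidHom.range_eq_top.2 hφ,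
    AddSubgroup.card_top]

section

variable {ι : Type*} [Fintype ι] [DecidableEq ι]

def linearForm (a : ι → ℤ) : (ι → G) →+ G where
  toFun v := ∑ i, a i • v i
  map_zero' := by simp
  map_add' v w := by simp only [Pi.add_apply, smul_add, sum_add_distrib]

lemma card_filter_sum_zsmul_eq_zero_mul_card (a : ι → ℤ)
    (ha : Function.Surjective (linearForm (G := G) a)) :
    #{v : ι → G | ∑ i, a i • v i = 0} * Fintype.card G = Fintype.card G ^ Fintype.card ι := by
  have hker : Nat.card (linearForm (G := G) a).ker = #{v : ι → G | ∑ i, a i • v i = 0} := by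
    simp only [Nat.card_eq_fintype_card, Fintype.card_subtype, AddMonoidHom.mem_ker]
    rfl
  have h := (linearForm (G := G) a).card_ker_mul_card_of_surjective ha
  rwa [hker, Nat.card_eq_fintype_card, Nat.card_eq_fintype_card, Fintype.card_fun] at h

omit [DecidableEq G] [DecidableEq ι] in
lemma ft_zpow (f : G → ℝ) (γ : AddChar G ℂ) (n : ℤ) :
    ft f (γ ^ n) = (∑ x, γ (n • x) * (f x : ℂ)) / Fintype.card G := by
  simp only [ft, AddChar.zpow_apply, AddChar.map_zsmul_eq_zpow]

lemma sum_addChar_prod_sum_zsmul (a : ι → ℤ) (h : G → ℂ) :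
    ∑ γ : AddChar G ℂ, ∏ i, ∑ x, γ (a i • x) * h x =
      Fintype.card G * ∑ v : ι → G with ∑ i, a i • v i = 0, ∏ i, h (v i) := by
  calc ∑ γ : AddChar G ℂ, ∏ i, ∑ x, γ (a i • x) * h x
      = ∑ v : ι → G, (∑ γ : AddChar G ℂ, γ (∑ i, a i • v i)) * ∏ i, h (v i) := by
        simp_rw [Fintype.prod_sum, sum_mul, AddChar.map_sum_eq_prod, ← prod_mul_distrib]
        exact sum_comm
    _ = Fintype.card G * ∑ v : ι → G with ∑ i, a i • v i = 0, ∏ i, h (v i) := by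
        simp_rw [AddChar.sum_apply_eq_ite, ite_mul, zero_mul, sum_ite, sum_const_zero, add_zero,
          mul_sum]

lemma sum_addChar_prod_ft_zpow (a : ι → ℤ) (f : G → ℝ) :
    ∑ γ : AddChar G ℂ, ∏ i, ft f (γ ^ a i) =
      Fintype.card G / Fintype.card G ^ Fintype.card ι *
        ∑ v : ι → G with ∑ i, a i • v i = 0, ∏ i, (f (v i) : ℂ) := by
  simp_rw [ft_zpow, prod_div_distrib, prod_const, card_univ, ← sum_div,
    sum_addChar_prod_sum_zsmul]
  ring

end

theorem fourier_density_characters_general {d : ℕ} (L : Matrix (Fin 1) (Fin d) ℤ)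
    (hrank : Function.Surjective (fun v : Fin d → G => ∑ i, L 0 i • v i))
    (f : G → ℝ) :
    (tL L f : ℂ) = ∑ γ : AddChar G ℂ, ∏ i, ft f (γ ^ (L 0 i)) := by
  have hcard : ((config (G := G) L).card : ℂ) * Fintype.card G = Fintype.card G ^ d := by
    have h := card_filter_sum_zsmul_eq_zero_mul_card (L 0) hrank
    rw [Fintype.card_fin] at h
    exact_mod_cast h
  have hG : (Fintype.card G : ℂ) ≠ 0 := Nat.cast_ne_zero.2 Fintype.card_ne_zero
  rw [sum_addChar_prod_ft_zpow, Fintype.card_fin, ← hcard, div_mul_cancel_right₀ hG,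
    inv_mul_eq_div, tL, config]
  push_cast
  rfl

/-- If `L ∈ ℤ^{1×d}` has full rank in `G` (the induced map `G^d → G` is surjective), then for
every `f : G → [0,1]` one has `t_L(f) = ∑_{γ ∈ Ĝ} ∏ i, f̂(γ^{L_{1i}})`. -/
theorem fourier_density_characters {d : ℕ} (L : Matrix (Fin 1) (Fin d) ℤ)
    (hrank : Function.Surjective (fun v : Fin d → G => ∑ i, L 0 i • v i))
    (f : G → ℝ) (hf : ∀ x, f x ∈ Set.Icc (0 : ℝ) 1) :
    (tL L f : ℂ) = ∑ γ : AddChar G ℂ, ∏ i, ft f (γ ^ (L 0 i)) :=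
  fourier_density_characters_general L hrank f
end
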